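/- Let T : V → V be any ℂ-linear map with J∘T = ε'·(T∘J), and let a ∈ A. Define γ := (σ(a))^ ∘ (T∘π(a) − π(σ(a))∘T). Then T∘(π(a)∘â) − (π(σ(a))∘(σ(a))^)∘T = γ + ε'·J∘γ∘J⁻¹ + ([T, π(a)]_σ∘â − (σ(a))^∘[T, π(a)]_σ). Consequently the twisted commutator of T with π(a)∘â (twisted by π(σ(a))∘(σ(a))^) vanishes if and only if γ + ε'·J∘γ∘J⁻¹ + [[T, π(a)]_σ, â]_{σ°} = 0. (Interpretation: with a = 𝔲 := σ(u)*·u for a unitary u and T = D_ω, this is the criterion for selfadjointness of the gauge-transformed twisted-fluctuated Dirac operator.) -/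

import Mathlib

/-!
Conjugation by `J` is a ring endomorphism of `End V`; it is involutive because `J ∘ J` is a
nonzero scalar, and it multiplies `T` by `ε'`. Hence `ε' · J γ J⁻¹ = π(σ a) (T â - (σ a)^ T)`,
using `ε'² = 1`, and the identity reduces to a noncommutative ring identity.
-/

/-- Conjugation `T ↦ J ∘ T ∘ J⁻¹` of a `ℂ`-linear endomorphism by a conjugate-linear
equivalence `J`; applied to `π(a)` it gives the "hat" `â = J∘π(a)∘J⁻¹`. -/
noncomputable def hatConj {V : Type*} [AddCommGroup V] [Module ℂ V]
    (J : V ≃ₗ⋆[ℂ] V) (T : Module.End ℂ V) : Module.End ℂ V where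
  toFun x := J (T (J.symm x))
  map_add' x y := by simp
  map_smul' c x := by
    simp only [LinearEquiv.map_smulₛₗ, LinearMap.map_smulₛₗ, RingHom.id_apply,
      map_smulₛₗ, starRingEnd_self_apply]

theorem twisted_commutator_mul_map_eq {S R : Type*} [CommSemiring S] [Ring R] [Algebra S R]
    (φ : R →+* R) (p q T : R) (e : S) (he : e * e = 1) (hT : φ T = e • T) (hq : φ (φ q) = q) :
    T * (p * φ p) - (q * φ q) * T =
      φ q * (T * p - q * T) + e • φ (φ q * (T * p - q * T))
        + ((T * p - q * T) * φ p - φ q * (T * p - q * T)) := by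
  have hφγ : e • φ (φ q * (T * p - q * T)) = q * (T * φ p - φ q * T) := by
    simp only [map_mul, map_sub, hq, hT, mul_smul_comm, smul_mul_assoc, ← smul_sub, smul_smul,
      he, one_smul]
  rw [hφγ]
  noncomm_ring

section hatConj

variable {V : Type*} [AddCommGroup V] [Module ℂ V] (J : V ≃ₗ⋆[ℂ] V)

@[simp]
lemma hatConj_apply (T : Module.End ℂ V) (v : V) : hatConj J T v = J (T (J.symm v)) := rfl

noncomputable def hatConjRingHom : Module.End ℂ V →+* Module.End ℂ V where
  toFun := hatConj J
  map_one' := by ext; simp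
  map_mul' S T := by ext; simp
  map_zero' := by ext; simp
  map_add' S T := by ext; simp

lemma hatConj_hatConj {c : ℂ} (hc : c ≠ 0) (hJJ : ∀ v : V, J (J v) = c • v)
    (S : Module.End ℂ V) : hatConj J (hatConj J S) = S := by
  have hsymm : ∀ v : V, J.symm (J.symm v) = c⁻¹ • v := by
    intro v
    apply J.injective
    apply J.injective
    rw [J.apply_symm_apply, J.apply_symm_apply, hJJ, smul_smul, mul_inv_cancel₀ hc, one_smul]
  ext v
  simp [hsymm, hJJ, smul_smul, hc]

lemma hatConj_eq_smul_of_apply_comm {T : Module.End ℂ V} {c : ℂ}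
    (hJT : ∀ v : V, J (T v) = c • T (J v)) : hatConj J T = c • T := by
  ext v
  simp [hJT]

end hatConj

theorem selfadjointness_criterion_general {V A : Type*} [AddCommGroup V] [Module ℂ V]
    [Ring A] [Algebra ℂ A]
    (π : A →ₐ[ℂ] Module.End ℂ V) (J : V ≃ₗ⋆[ℂ] V)
    (ε : ℂ) (hε : ε = 1 ∨ ε = -1) (hJJ : ∀ v : V, J (J v) = ε • v)
    (σ : A ≃ₐ[ℂ] A)
    (ε' : ℂ) (hε' : ε' = 1 ∨ ε' = -1)
    (T : Module.End ℂ V) (hJT : ∀ v : V, J (T v) = ε' • T (J v)) (a : A) :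
    (T * (π a * hatConj J (π a)) - (π (σ a) * hatConj J (π (σ a))) * T =
      hatConj J (π (σ a)) * (T * π a - π (σ a) * T)
        + ε' • hatConj J (hatConj J (π (σ a)) * (T * π a - π (σ a) * T))
        + ((T * π a - π (σ a) * T) * hatConj J (π a)
            - hatConj J (π (σ a)) * (T * π a - π (σ a) * T))) ∧
    ((T * (π a * hatConj J (π a)) - (π (σ a) * hatConj J (π (σ a))) * T = 0) ↔
      hatConj J (π (σ a)) * (T * π a - π (σ a) * T)
        + ε' • hatConj J (hatConj J (π (σ a)) * (T * π a - π (σ a) * T))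
        + ((T * π a - π (σ a) * T) * hatConj J (π a)
            - hatConj J (π (σ a)) * (T * π a - π (σ a) * T)) = 0) := by
  have hε₀ : ε ≠ 0 := by rcases hε with rfl | rfl <;> norm_num
  have hε'sq : ε' * ε' = 1 := by rcases hε' with rfl | rfl <;> norm_num
  have key := twisted_commutator_mul_map_eq (hatConjRingHom J) (π a) (π (σ a)) T ε' hε'sq
    (hatConj_eq_smul_of_apply_comm J hJT) (hatConj_hatConj J hε₀ hJJ _)
  exact ⟨key, congrArg (· = 0) key |>.to_iff⟩

/-- with `γ := (σ(a))^ ∘ [T,π(a)]_σ`, one has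
`[T, π(a)∘â]_{π(σ(a))∘(σ(a))^} = γ + ε'·J∘γ∘J⁻¹ + [[T,π(a)]_σ, â]_{σ°}`, and consequently
the left-hand side vanishes iff the right-hand side does (criterion for selfadjointness of
the gauge-transformed twisted-fluctuated Dirac operator). -/
theorem selfadjointness_criterion {V A : Type*} [AddCommGroup V] [Module ℂ V]
    [Ring A] [Algebra ℂ A] [StarRing A]
    (π : A →ₐ[ℂ] Module.End ℂ V) (J : V ≃ₗ⋆[ℂ] V)
    (ε : ℂ) (hε : ε = 1 ∨ ε = -1) (hJJ : ∀ v : V, J (J v) = ε • v)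
    (σ : A ≃ₐ[ℂ] A) (hreg : ∀ a : A, σ (star a) = star (σ.symm a))
    (hzero : ∀ a b : A, π a * hatConj J (π b) = hatConj J (π b) * π a)
    (ε' : ℂ) (hε' : ε' = 1 ∨ ε' = -1)
    (T : Module.End ℂ V) (hJT : ∀ v : V, J (T v) = ε' • T (J v)) (a : A) :
    (T * (π a * hatConj J (π a)) - (π (σ a) * hatConj J (π (σ a))) * T =
      hatConj J (π (σ a)) * (T * π a - π (σ a) * T)
        + ε' • hatConj J (hatConj J (π (σ a)) * (T * π a - π (σ a) * T))
        + ((T * π a - π (σ a) * T) * hatConj J (π a)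
            - hatConj J (π (σ a)) * (T * π a - π (σ a) * T))) ∧
    ((T * (π a * hatConj J (π a)) - (π (σ a) * hatConj J (π (σ a))) * T = 0) ↔
      hatConj J (π (σ a)) * (T * π a - π (σ a) * T)
        + ε' • hatConj J (hatConj J (π (σ a)) * (T * π a - π (σ a) * T))
        + ((T * π a - π (σ a) * T) * hatConj J (π a)
            - hatConj J (π (σ a)) * (T * π a - π (σ a) * T)) = 0) :=
  selfadjointness_criterion_general π J ε hε hJJ σ ε' hε' T hJT a
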